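/- Let G be a finite group, p a prime, P₁ a p-subgroup of G, L a normal subgroup of G, and N a normal p'-subgroup of G (i.e., p does not divide |N|). Then in G/N, one has (P₁N/N) ∩ (LN/N) = (P₁ ∩ L)N/N. -/

import Mathlib

open scoped Pointwise

/-- A subgroup `M` of `Q` is a minimal normal subgroup. -/
def IsMinimalNormal {Q : Type*} [Group Q] (M : Subgroup Q) : Prop :=
  M.Normal ∧ M ≠ ⊥ ∧ ∀ N : Subgroup Q, N.Normal → N ≤ M → N = ⊥ ∨ N = M

/-- `L/K` is a chief factor of `G`. -/
def IsChiefFactor {G : Type*} [Group G] (K L : Subgroup G) (hK : K.Normal) : Prop :=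
  L.Normal ∧ K ≤ L ∧ (letI := hK; IsMinimalNormal (L.map (QuotientGroup.mk' K)))

/-- `H` satisfies the Π-property in `G`: for every chief factor `L/K` of `G`,
every prime dividing `|G/K : N_{G/K}(HK/K ∩ L/K)|` divides `|HK/K ∩ L/K|`. -/
def PiProperty {G : Type*} [Group G] (H : Subgroup G) : Prop :=
  ∀ (K L : Subgroup G) (hK : K.Normal), IsChiefFactor K L hK →
    (letI := hK;
      ∀ q : ℕ, q.Prime →
        q ∣ (Subgroup.normalizer
              (↑(H.map (QuotientGroup.mk' K) ⊓ L.map (QuotientGroup.mk' K)) : Set (G ⧸ K))).index →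
        q ∣ Nat.card ↥(H.map (QuotientGroup.mk' K) ⊓ L.map (QuotientGroup.mk' K)))

/-- `G` is `p`-soluble: every chief factor is a `p`-group or a `p'`-group. -/
def PSoluble (p : ℕ) (G : Type*) [Group G] : Prop :=
  ∀ (K L : Subgroup G) (hK : K.Normal), IsChiefFactor K L hK →
    (letI := hK;
      IsPGroup p ↥(L.map (QuotientGroup.mk' K)) ∨
      ¬ p ∣ Nat.card ↥(L.map (QuotientGroup.mk' K)))

/-- `G` is `p`-supersoluble: `p`-soluble and every chief factor of order divisible
by `p` has order exactly `p`. -/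
def PSupersoluble (p : ℕ) (G : Type*) [Group G] : Prop :=
  PSoluble p G ∧
  ∀ (K L : Subgroup G) (hK : K.Normal), IsChiefFactor K L hK →
    (letI := hK;
      p ∣ Nat.card ↥(L.map (QuotientGroup.mk' K)) →
      Nat.card ↥(L.map (QuotientGroup.mk' K)) = p)

/-- `G` is `p`-nilpotent: it has a normal subgroup of order coprime to `p`
whose index is a power of `p`. -/
def PNilpotent (p : ℕ) (G : Type*) [Group G] : Prop :=
  ∃ N : Subgroup G, N.Normal ∧ Nat.Coprime (Nat.card N) p ∧ ∃ k : ℕ, N.index = p ^ k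

/-- The Frattini subgroup: the intersection of all maximal subgroups. -/
def frattiniSubgroup (H : Type*) [Group H] : Subgroup H :=
  sInf {M : Subgroup H | IsCoatom M}

/-- `O^p(G)`: the smallest normal subgroup of `G` with `p`-group quotient. -/
def pResidual (p : ℕ) (G : Type*) [Group G] : Subgroup G :=
  sInf {N : Subgroup G | N.Normal ∧ ∀ g : G, ∃ k : ℕ, g ^ p ^ k ∈ N}

/-- `T` is subnormal in `G`. -/
def IsSubnormal {G : Type*} [Group G] (T : Subgroup G) : Prop :=
  ∃ (n : ℕ) (c : Fin (n + 1) → Subgroup G), c 0 = T ∧ c (Fin.last n) = ⊤ ∧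
    ∀ i : Fin n, c i.castSucc ≤ c i.succ ∧ ((c i.castSucc).subgroupOf (c i.succ)).Normal

/-- Two subgroups permute: `AB = BA` as sets. -/
def Permutes {G : Type*} [Group G] (A B : Subgroup G) : Prop :=
  (A : Set G) * (B : Set G) = (B : Set G) * (A : Set G)

/-- `H` is S-semipermutable in `G`: `H` permutes with every Sylow `q`-subgroup of `G`
for every prime `q` not dividing `|H|`. -/
def SSemipermutable {G : Type*} [Group G] (H : Subgroup G) : Prop :=
  ∀ q : ℕ, q.Prime → ¬ q ∣ Nat.card H → ∀ Q : Sylow q G, Permutes H Q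


lemma pgroup_le_of_le_sup {G : Type*} [Group G] [Finite G] {p : ℕ} (hp : p.Prime)
    {H L N : Subgroup G} (hH : IsPGroup p H) [L.Normal] [N.Normal]
    (hN : ¬ p ∣ Nat.card N) (hle : H ≤ L ⊔ N) : H ≤ L := by
  haveI : Fact p.Prime := ⟨hp⟩
  set π := QuotientGroup.mk' L with hπ
  have hLbot : L.map π = ⊥ :=
    (Subgroup.map_eq_bot_iff _).mpr (by rw [QuotientGroup.ker_mk'])
  have h1 : H.map π ≤ N.map π := by
    calc H.map π ≤ (L ⊔ N).map π := Subgroup.map_mono hle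
      _ = L.map π ⊔ N.map π := by rw [Subgroup.map_sup]
      _ = N.map π := by rw [hLbot, bot_sup_eq]
  have h2 : IsPGroup p (H.map π) := hH.map π
  obtain ⟨k, hk⟩ := IsPGroup.iff_card.mp h2
  have hdvd1 : Nat.card (H.map π) ∣ Nat.card (N.map π) := Subgroup.card_dvd_of_le h1
  have hdvd2 : Nat.card (N.map π) ∣ Nat.card N :=
    Subgroup.card_dvd_of_surjective _ (π.subgroupMap_surjective N)
  have hk0 : k = 0 := by
    by_contra hk0
    exact hN (dvd_trans (dvd_trans (dvd_pow_self p hk0) (hk ▸ hdvd1)) hdvd2)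
  have : H.map π = ⊥ := Subgroup.eq_bot_of_card_eq _ (by rw [hk, hk0, pow_zero])
  have := (Subgroup.map_eq_bot_iff _).mp this
  rwa [hπ, QuotientGroup.ker_mk'] at this

theorem stmt2 {G : Type*} [Group G] [Finite G] (p : ℕ) (hp : p.Prime)
    (P₁ L N : Subgroup G) (hP₁ : IsPGroup p P₁) [L.Normal] [N.Normal]
    (hN : ¬ p ∣ Nat.card N) :
    P₁.map (QuotientGroup.mk' N) ⊓ L.map (QuotientGroup.mk' N)
      = (P₁ ⊓ L).map (QuotientGroup.mk' N) := by
  refine le_antisymm ?_ (le_inf (Subgroup.map_mono inf_le_left) (Subgroup.map_mono inf_le_right))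
  rintro x ⟨hx₁, hx₂⟩
  obtain ⟨a, ha, rfl⟩ := hx₁
  obtain ⟨b, hb, hba⟩ := hx₂
  have hmem : a ∈ L ⊔ N := by
    have hn : b⁻¹ * a ∈ N := by
      rw [← QuotientGroup.ker_mk' N, MonoidHom.mem_ker, map_mul, map_inv, hba, inv_mul_cancel]
    have : a = b * (b⁻¹ * a) := by group
    rw [this]
    exact mul_mem (Subgroup.mem_sup_left hb) (Subgroup.mem_sup_right hn)
  have hkey : P₁ ⊓ (L ⊔ N) ≤ L :=
    pgroup_le_of_le_sup hp (hP₁.to_inf_left) hN inf_le_right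
  exact Subgroup.mem_map_of_mem _ ⟨ha, hkey ⟨ha, hmem⟩⟩
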